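/- arXiv:1610.02737 — 8 statements merged into one kernel-verified Lean document; each statement's English description precedes it below -/
import Mathlib

section
/- Let P and Q be nonempty compact convex sets in ℝⁿ and let C = P + Q (Minkowski sum). Then for every nonempty face F of C there exist a face F_P of P and a face F_Q of Q such that F = F_P + F_Q. -/
open Pointwise

/-- `F` is a face of the convex set `C`: a convex subset that is extreme in `C`. -/
def IsFace {n : ℕ} (C F : Set (EuclideanSpace ℝ (Fin n))) : Prop :=
  Convex ℝ F ∧ IsExtreme ℝ C F

/-!
The summands are `F_P = P ∩ (F - Q)` and `F_Q = Q ∩ (F - P)`, the points of `P` and of `Q` that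
occur in some decomposition of a point of `F`. Translating a segment of `P` by `q` shows that
`F_P` is extreme in `P`. For `F_P + F_Q ⊆ F`: if `p + q'` and `p' + q` lie in `F`, their midpoint
is also the midpoint of `p + q` and `p' + q'`, so extremality of `F` puts `p + q` in `F`.
-/

open Set

variable {𝕜 E : Type*} [AddCommGroup E] {P Q F : Set E}

theorem IsExtreme.inter_sub_of_add [Ring 𝕜] [PartialOrder 𝕜] [AddRightMono 𝕜] [Module 𝕜 E]
    (hF : IsExtreme 𝕜 (P + Q) F) : IsExtreme 𝕜 P (P ∩ (F - Q)) := by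
  refine ⟨inter_subset_left, fun a ha b hb x ⟨_, f, hf, q, hq, hfq⟩ hx ↦ ⟨ha, ?_⟩⟩
  have hxq : x + q ∈ F := by rwa [← hfq, sub_add_cancel]
  have hseg : x + q ∈ openSegment 𝕜 (a + q) (b + q) := by
    simpa only [add_comm _ q] using (mem_openSegment_translate 𝕜 q).2 hx
  exact ⟨a + q, hF.left_mem_of_mem_openSegment (add_mem_add ha hq) (add_mem_add hb hq) hxq hseg,
    q, hq, add_sub_cancel_right a q⟩

section LinearOrderedRing

variable [Ring 𝕜] [LinearOrder 𝕜] [IsStrictOrderedRing 𝕜] [Module 𝕜 E] [Invertible (2 : 𝕜)]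

theorem IsExtreme.add_mem_of_add_mem_of_add_mem (hFc : Convex 𝕜 F) (hF : IsExtreme 𝕜 (P + Q) F)
    {p p' q q' : E} (hp : p ∈ P) (hp' : p' ∈ P) (hq : q ∈ Q) (hq' : q' ∈ Q)
    (h₁ : p + q' ∈ F) (h₂ : p' + q ∈ F) : p + q ∈ F := by
  have hmid : midpoint 𝕜 (p + q) (p' + q') = midpoint 𝕜 (p + q') (p' + q) := by
    simp only [← vadd_eq_add, ← midpoint_vadd_midpoint, midpoint_comm q]
  exact hF.left_mem_of_mem_openSegment (add_mem_add hp hq) (add_mem_add hp' hq')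
    (hmid ▸ hFc.midpoint_mem h₁ h₂) (midpoint_mem_openSegment _ _)

theorem IsExtreme.eq_inter_sub_add_inter_sub (hFc : Convex 𝕜 F) (hF : IsExtreme 𝕜 (P + Q) F) :
    F = P ∩ (F - Q) + Q ∩ (F - P) := by
  refine Subset.antisymm (fun x hx ↦ ?_) ?_
  · obtain ⟨p, hp, q, hq, rfl⟩ := hF.subset hx
    exact ⟨p, ⟨hp, _, hx, q, hq, add_sub_cancel_right p q⟩,
      q, ⟨hq, _, hx, p, hp, add_sub_cancel_left p q⟩, rfl⟩
  · rintro _ ⟨p, ⟨hp, f, hf, q', hq', rfl⟩, q, ⟨hq, f', hf', p', hp', rfl⟩, rfl⟩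
    refine hF.add_mem_of_add_mem_of_add_mem hFc hp hp' hq hq' ?_ ?_
    · rwa [sub_add_cancel]
    · rwa [add_sub_cancel]

end LinearOrderedRing

theorem minkowski_face_decomposition_general {n : ℕ}
    (P Q : Set (EuclideanSpace ℝ (Fin n)))
    (hPconv : Convex ℝ P) (hQconv : Convex ℝ Q)
    (C : Set (EuclideanSpace ℝ (Fin n))) (hC : C = P + Q)
    (F : Set (EuclideanSpace ℝ (Fin n))) (hF : IsFace C F) :
    ∃ F_P F_Q : Set (EuclideanSpace ℝ (Fin n)),
      IsFace P F_P ∧ IsFace Q F_Q ∧ F = F_P + F_Q := by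
  obtain ⟨hFconv, hFext⟩ := hF
  subst hC
  have hFext' : IsExtreme ℝ (Q + P) F := add_comm P Q ▸ hFext
  exact ⟨P ∩ (F - Q), Q ∩ (F - P),
    ⟨hPconv.inter (hFconv.sub hQconv), hFext.inter_sub_of_add⟩,
    ⟨hQconv.inter (hFconv.sub hPconv), hFext'.inter_sub_of_add⟩,
    hFext.eq_inter_sub_add_inter_sub hFconv⟩

theorem minkowski_face_decomposition {n : ℕ}
    (P Q : Set (EuclideanSpace ℝ (Fin n)))
    (hPne : P.Nonempty) (hQne : Q.Nonempty)
    (hPc : IsCompact P) (hQc : IsCompact Q)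
    (hPconv : Convex ℝ P) (hQconv : Convex ℝ Q)
    (C : Set (EuclideanSpace ℝ (Fin n))) (hC : C = P + Q)
    (F : Set (EuclideanSpace ℝ (Fin n))) (hF : IsFace C F) (hFne : F.Nonempty) :
    ∃ F_P F_Q : Set (EuclideanSpace ℝ (Fin n)),
      IsFace P F_P ∧ IsFace Q F_Q ∧ F = F_P + F_Q :=
  minkowski_face_decomposition_general P Q hPconv hQconv C hC F hF
end

section
/- Let P and Q be nonempty compact convex sets in ℝⁿ, C = P + Q, and F a nonempty face of C. Define F_P = {x ∈ P : ∃ y ∈ Q, x + y ∈ F}. Then F_P is a face of P. -/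
open Pointwise

/-! The set in question is `P ∩ (F - Q)`, which is convex as an intersection of convex sets.
It is extreme in `P` because translating an open segment of `P` through one of its points by
`y ∈ Q` gives an open segment of `P + Q` through a point of `F`. -/

section Minkowski

variable {𝕜 E : Type*} [Ring 𝕜] [PartialOrder 𝕜] [IsOrderedRing 𝕜] [AddCommGroup E] [Module 𝕜 E]

theorem sep_exists_add_mem_eq_inter_sub (A B F : Set E) :
    {x ∈ A | ∃ y ∈ B, x + y ∈ F} = A ∩ (F - B) := by
  ext x
  simp only [Set.mem_ofPred_eq, Set.mem_inter_iff, Set.mem_sub]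
  refine and_congr_right fun _ ↦ ⟨fun ⟨y, hy, hxy⟩ ↦ ⟨x + y, hxy, y, hy, add_sub_cancel_right x y⟩,
    fun ⟨f, hf, y, hy, hfy⟩ ↦ ⟨y, hy, by rwa [← hfy, sub_add_cancel]⟩⟩

theorem IsExtreme.inter_sub_of_add_s1 {A B F : Set E} (hF : IsExtreme 𝕜 (A + B) F) :
    IsExtreme 𝕜 A (A ∩ (F - B)) := by
  refine ⟨Set.inter_subset_left, fun x₁ hx₁ x₂ hx₂ x ⟨hxA, f, hf, y, hy, hfy⟩ hx ↦ ?_⟩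
  have hxy : y + x ∈ openSegment 𝕜 (y + x₁) (y + x₂) := (mem_openSegment_translate 𝕜 y).2 hx
  rw [add_comm y x, ← hfy, sub_add_cancel, add_comm y, add_comm y] at hxy
  exact ⟨hx₁, _, hF.left_mem_of_mem_openSegment (Set.add_mem_add hx₁ hy)
    (Set.add_mem_add hx₂ hy) hf hxy, y, hy, add_sub_cancel_right x₁ y⟩

end Minkowski

theorem minkowski_face_component_is_face_general {n : ℕ}
    (P Q : Set (EuclideanSpace ℝ (Fin n)))
    (hPconv : Convex ℝ P) (hQconv : Convex ℝ Q)
    (C : Set (EuclideanSpace ℝ (Fin n))) (hC : C = P + Q)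
    (F : Set (EuclideanSpace ℝ (Fin n))) (hF : IsFace C F) :
    IsFace P {x ∈ P | ∃ y ∈ Q, x + y ∈ F} := by
  obtain ⟨hFconv, hFext⟩ := hF
  rw [sep_exists_add_mem_eq_inter_sub]
  subst hC
  exact ⟨hPconv.inter (hFconv.sub hQconv), hFext.inter_sub_of_add_s1⟩

theorem minkowski_face_component_is_face {n : ℕ}
    (P Q : Set (EuclideanSpace ℝ (Fin n)))
    (hPne : P.Nonempty) (hQne : Q.Nonempty)
    (hPc : IsCompact P) (hQc : IsCompact Q)
    (hPconv : Convex ℝ P) (hQconv : Convex ℝ Q)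
    (C : Set (EuclideanSpace ℝ (Fin n))) (hC : C = P + Q)
    (F : Set (EuclideanSpace ℝ (Fin n))) (hF : IsFace C F) (hFne : F.Nonempty) :
    IsFace P {x ∈ P | ∃ y ∈ Q, x + y ∈ F} :=
  minkowski_face_component_is_face_general P Q hPconv hQconv C hC F hF
end

section
/- Let P and Q be nonempty compact convex sets in ℝⁿ, C = P + Q, and F a nonempty face of C. Define F_P = {x ∈ P : ∃ y ∈ Q, x + y ∈ F} and F_Q = {y ∈ Q : ∃ x ∈ P, x + y ∈ F}. Then F = F_P + F_Q. -/
open Pointwise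

section FaceOfMinkowskiSum

variable {𝕜 E : Type*} [Field 𝕜] [LinearOrder 𝕜] [IsStrictOrderedRing 𝕜]
  [AddCommGroup E] [Module 𝕜 E] {A B F : Set E}

/-- The midpoint of `x + y'` and `x' + y` is also the midpoint of `x + y` and `x' + y'`. -/
theorem IsExtreme.add_mem_of_add_mem_swap (hFconv : Convex 𝕜 F) (hF : IsExtreme 𝕜 (A + B) F)
    {x x' y y' : E} (hx : x ∈ A) (hx' : x' ∈ A) (hy : y ∈ B) (hy' : y' ∈ B)
    (hxy' : x + y' ∈ F) (hx'y : x' + y ∈ F) : x + y ∈ F := by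
  have hmid : (1 / 2 : 𝕜) • (x + y') + (1 / 2 : 𝕜) • (x' + y)
      = (1 / 2 : 𝕜) • (x + y) + (1 / 2 : 𝕜) • (x' + y') := by
    simp only [smul_add]; abel
  have hmidF : (1 / 2 : 𝕜) • (x + y) + (1 / 2 : 𝕜) • (x' + y') ∈ F :=
    hmid ▸ hFconv hxy' hx'y (by norm_num) (by norm_num) (by norm_num)
  exact hF.left_mem_of_mem_openSegment (Set.add_mem_add hx hy) (Set.add_mem_add hx' hy') hmidF
    ⟨1 / 2, 1 / 2, by norm_num, by norm_num, by norm_num, rfl⟩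

theorem IsExtreme.eq_add_of_convex (hFconv : Convex 𝕜 F) (hF : IsExtreme 𝕜 (A + B) F) :
    F = {x ∈ A | ∃ y ∈ B, x + y ∈ F} + {y ∈ B | ∃ x ∈ A, x + y ∈ F} := by
  refine Set.Subset.antisymm (fun z hz => ?_) ?_
  · obtain ⟨x, hx, y, hy, rfl⟩ := hF.subset hz
    exact Set.add_mem_add ⟨hx, y, hy, hz⟩ ⟨hy, x, hx, hz⟩
  · rintro _ ⟨x, ⟨hx, y', hy', hxy'⟩, y, ⟨hy, x', hx', hx'y⟩, rfl⟩
    exact hF.add_mem_of_add_mem_swap hFconv hx hx' hy hy' hxy' hx'y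

end FaceOfMinkowskiSum

theorem minkowski_face_eq_sum_of_components_general {n : ℕ}
    (P Q : Set (EuclideanSpace ℝ (Fin n)))
    (C : Set (EuclideanSpace ℝ (Fin n))) (hC : C = P + Q)
    (F : Set (EuclideanSpace ℝ (Fin n))) (hF : IsFace C F) :
    F = {x ∈ P | ∃ y ∈ Q, x + y ∈ F} + {y ∈ Q | ∃ x ∈ P, x + y ∈ F} :=
  (hC ▸ hF.2).eq_add_of_convex hF.1

theorem minkowski_face_eq_sum_of_components {n : ℕ}
    (P Q : Set (EuclideanSpace ℝ (Fin n)))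
    (hPne : P.Nonempty) (hQne : Q.Nonempty)
    (hPc : IsCompact P) (hQc : IsCompact Q)
    (hPconv : Convex ℝ P) (hQconv : Convex ℝ Q)
    (C : Set (EuclideanSpace ℝ (Fin n))) (hC : C = P + Q)
    (F : Set (EuclideanSpace ℝ (Fin n))) (hF : IsFace C F) (hFne : F.Nonempty) :
    F = {x ∈ P | ∃ y ∈ Q, x + y ∈ F} + {y ∈ Q | ∃ x ∈ P, x + y ∈ F} :=
  minkowski_face_eq_sum_of_components_general P Q C hC F hF
end

section
/- Let Q ⊆ ℝᵐ be a nonempty compact convex set, Q' = Q × {0} ⊆ ℝ^{m+1}, B the closed unit ball of ℝ^{m+1}, and e = (0,…,0,1). Then {e} + Q' is a face of B + Q'. -/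
open Metric Pointwise

open RealInnerProductSpace

/-!
The functional `⟪e, ·⟫` is at most `1` on the unit ball and vanishes on `Q'`, so it is at most `1`
on `B + Q'`; since `e` is the only point of the ball where it equals `1`, the set where the maximum
`1` is attained is exactly `{e} + Q'`. Hence `{e} + Q'` is an exposed, and in particular an extreme,
subset of `B + Q'`.
-/

section ExposedByUnitVector

variable {E : Type*} [NormedAddCommGroup E] [InnerProductSpace ℝ E] {u : E}

lemma inner_le_one_of_mem_closedBall (hu : ‖u‖ = 1) {b : E} (hb : b ∈ closedBall (0 : E) 1) :
    ⟪u, b⟫ ≤ 1 := by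
  rw [mem_closedBall_zero_iff] at hb
  calc ⟪u, b⟫ ≤ ‖u‖ * ‖b‖ := real_inner_le_norm u b
    _ ≤ 1 := by rw [hu, one_mul]; exact hb

lemma eq_of_mem_closedBall_of_inner_eq_one (hu : ‖u‖ = 1) {b : E}
    (hb : b ∈ closedBall (0 : E) 1) (hub : ⟪u, b⟫ = 1) : b = u := by
  rw [mem_closedBall_zero_iff] at hb
  have hb1 : ‖b‖ = 1 := le_antisymm hb <| by
    simpa [hu, hub] using real_inner_le_norm u b
  exact ((inner_eq_one_iff_of_norm_eq_one hu hb1).mp hub).symm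

variable {S : Set E}

lemma inner_le_one_of_mem_closedBall_add (hu : ‖u‖ = 1) (hS : ∀ s ∈ S, ⟪u, s⟫ = 0) {x : E}
    (hx : x ∈ closedBall (0 : E) 1 + S) : ⟪u, x⟫ ≤ 1 := by
  obtain ⟨b, hb, s, hs, rfl⟩ := hx
  rw [inner_add_right, hS s hs, add_zero]
  exact inner_le_one_of_mem_closedBall hu hb

lemma singleton_add_eq_toExposed_closedBall_add (hu : ‖u‖ = 1) (hS : ∀ s ∈ S, ⟪u, s⟫ = 0) :
    {u} + S = (innerSL ℝ u).toExposed (closedBall (0 : E) 1 + S) := by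
  have hu_ball : u ∈ closedBall (0 : E) 1 := by simp [hu]
  ext x
  simp only [ContinuousLinearMap.toExposed, innerSL_apply_apply, Set.mem_ofPred_eq]
  constructor
  · rintro ⟨v, hv, s, hs, rfl⟩
    rw [Set.mem_singleton_iff.mp hv]
    have hval : ⟪u, u + s⟫ = 1 := by
      rw [inner_add_right, hS s hs, real_inner_self_eq_norm_sq, hu]; norm_num
    exact ⟨Set.add_mem_add hu_ball hs,
      fun y hy => hval ▸ inner_le_one_of_mem_closedBall_add hu hS hy⟩
  · rintro ⟨⟨b, hb, s, hs, rfl⟩, hmax⟩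
    have hus : ⟪u, u + s⟫ ≤ ⟪u, b + s⟫ := hmax _ (Set.add_mem_add hu_ball hs)
    have hub : ⟪u, b⟫ = 1 := by
      rw [inner_add_right, inner_add_right, hS s hs, real_inner_self_eq_norm_sq, hu] at hus
      exact le_antisymm (inner_le_one_of_mem_closedBall hu hb) (by linarith)
    rw [eq_of_mem_closedBall_of_inner_eq_one hu hb hub]
    exact Set.add_mem_add rfl hs

lemma isExtreme_closedBall_add_singleton_add (hu : ‖u‖ = 1) (hS : ∀ s ∈ S, ⟪u, s⟫ = 0) :
    IsExtreme ℝ (closedBall (0 : E) 1 + S) ({u} + S) := by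
  rw [singleton_add_eq_toExposed_closedBall_add hu hS]
  exact ContinuousLinearMap.toExposed.isExposed.isExtreme

end ExposedByUnitVector

theorem embedded_set_plus_point_is_face_general {m : ℕ}
    (Q : Set (EuclideanSpace ℝ (Fin m)))
    (hQconv : Convex ℝ Q)
    (Q' : Set (EuclideanSpace ℝ (Fin (m + 1))))
    (hQ' : Q' = {x | WithLp.toLp 2 (fun i : Fin m => x i.castSucc) ∈ Q ∧ x (Fin.last m) = 0})
    (e : EuclideanSpace ℝ (Fin (m + 1))) (he : e = EuclideanSpace.single (Fin.last m) 1) :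
    IsFace (closedBall 0 1 + Q') ({e} + Q') := by
  have hQ'conv : Convex ℝ Q' := by
    rw [hQ']
    intro x hx y hy a b ha hb hab
    refine ⟨hQconv hx.1 hy.1 ha hb hab, ?_⟩
    change a * x (Fin.last m) + b * y (Fin.last m) = 0
    rw [hx.2, hy.2]; ring
  have he_norm : ‖e‖ = 1 := by simp [he]
  have hQ'_orth : ∀ q ∈ Q', ⟪e, q⟫ = 0 := by
    rw [hQ']
    rintro q ⟨-, hq⟩
    simp [he, EuclideanSpace.inner_single_left, hq]
  exact ⟨(convex_singleton e).add hQ'conv, isExtreme_closedBall_add_singleton_add he_norm hQ'_orth⟩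

theorem embedded_set_plus_point_is_face {m : ℕ}
    (Q : Set (EuclideanSpace ℝ (Fin m)))
    (hQne : Q.Nonempty) (hQc : IsCompact Q) (hQconv : Convex ℝ Q)
    (Q' : Set (EuclideanSpace ℝ (Fin (m + 1))))
    (hQ' : Q' = {x | WithLp.toLp 2 (fun i : Fin m => x i.castSucc) ∈ Q ∧ x (Fin.last m) = 0})
    (e : EuclideanSpace ℝ (Fin (m + 1))) (he : e = EuclideanSpace.single (Fin.last m) 1) :
    IsFace (closedBall 0 1 + Q') ({e} + Q') :=
  embedded_set_plus_point_is_face_general Q hQconv Q' hQ' e he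
end

section
/- Let Q ⊆ ℝⁿ be a nonempty compact convex set and B the closed unit ball of ℝⁿ. Then every nonempty proper face of C = B + Q is of the form {b} + F_Q where b is a point of the unit sphere and F_Q is a face of Q; in particular, every nonempty proper face of C is a translate of a face of Q. -/
open Metric Pointwise

/-!
A face `F` of `C = closedBall 0 1 + Q` containing a point `β + q` with `‖β‖ < 1` contains an
interior point of `C`, hence is all of `C`. So in every decomposition `β + q` of a point of a
proper face, `β` lies on the unit sphere; applying this to the midpoint of two decompositions,
strict convexity of the ball forces the ball components to coincide. Thus
`F ⊆ {b} + Q` for a single `b`, and `F = {b} + F_Q` with `F_Q = {q ∈ Q | b + q ∈ F}`.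
-/

open Filter Topology

theorem IsExtreme.eq_of_mem_interior {E : Type*} [AddCommGroup E] [Module ℝ E]
    [TopologicalSpace E] [ContinuousAdd E] [ContinuousSMul ℝ E] {C F : Set E} (hF : IsExtreme ℝ C F) {x : E}
    (hxF : x ∈ F) (hxC : x ∈ interior C) : F = C := by
  refine hF.subset.antisymm fun y hy => ?_
  have hcont : Continuous fun t : ℝ => x + t • (x - y) := by fun_prop
  have hnear : ∀ᶠ t in 𝓝[>] (0 : ℝ), x + t • (x - y) ∈ C :=
    nhdsWithin_le_nhds <| hcont.continuousAt.preimage_mem_nhds <| by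
      simpa using mem_interior_iff_mem_nhds.mp hxC
  obtain ⟨t, htC, ht⟩ := (hnear.and self_mem_nhdsWithin).exists
  -- `x` lies strictly between `y` and the point `x + t • (x - y)` beyond it
  refine hF.left_mem_of_mem_openSegment hy htC hxF
    ⟨t / (1 + t), 1 / (1 + t), by positivity, by positivity, by field_simp; ring, ?_⟩
  match_scalars <;> field_simp
  ring

theorem IsExtreme.inter_preimage_add {E : Type*} [AddCommGroup E] [Module ℝ E]
    {C F Q : Set E} (hF : IsExtreme ℝ C F) {b : E} (hQC : ∀ q ∈ Q, b + q ∈ C) :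
    IsExtreme ℝ Q (Q ∩ (b + ·) ⁻¹' F) where
  subset := Set.inter_subset_left
  left_mem_of_mem_openSegment _ hq₁ _ hq₂ _ hq hseg :=
    ⟨hq₁, hF.left_mem_of_mem_openSegment (hQC _ hq₁) (hQC _ hq₂) hq.2
      ((mem_openSegment_translate ℝ b).2 hseg)⟩

section NormedSpace

variable {E : Type*} [NormedAddCommGroup E] {Q F : Set E} {r : ℝ}

theorem add_mem_interior_closedBall_add {β q : E} (hβ : ‖β‖ < r) (hq : q ∈ Q) :
    β + q ∈ interior (closedBall 0 r + Q) :=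
  interior_mono (Set.add_subset_add_right ball_subset_closedBall) <|
    (isOpen_ball (x := (0 : E)) (ε := r)).add_right.interior_eq.symm ▸ Set.add_mem_add (mem_ball_zero_iff.2 hβ) hq

variable [NormedSpace ℝ E]

theorem IsExtreme.norm_eq_of_add_mem (hF : IsExtreme ℝ (closedBall 0 r + Q) F)
    (hne : F ≠ closedBall 0 r + Q) {β q : E} (hβ : β ∈ closedBall 0 r) (hq : q ∈ Q)
    (hx : β + q ∈ F) : ‖β‖ = r :=
  (mem_closedBall_zero_iff.1 hβ).eq_of_not_lt fun hlt =>
    hne (hF.eq_of_mem_interior hx (add_mem_interior_closedBall_add hlt hq))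

variable [StrictConvexSpace ℝ E]

theorem IsExtreme.eq_of_add_mem_of_add_mem (hQ : Convex ℝ Q) (hFc : Convex ℝ F)
    (hF : IsExtreme ℝ (closedBall 0 r + Q) F) (hne : F ≠ closedBall 0 r + Q) {β b q q' : E}
    (hβ : β ∈ closedBall 0 r) (hb : b ∈ closedBall 0 r) (hq : q ∈ Q) (hq' : q' ∈ Q)
    (hx : β + q ∈ F) (hx' : b + q' ∈ F) : β = b := by
  have hhalf : (0 : ℝ) ≤ 1 / 2 := by norm_num
  have hmid : ((1 / 2 : ℝ) • β + (1 / 2 : ℝ) • b) + ((1 / 2 : ℝ) • q + (1 / 2 : ℝ) • q') ∈ F := by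
    convert hFc hx hx' hhalf hhalf (by norm_num) using 1
    module
  have hmid_norm := hF.norm_eq_of_add_mem hne
    (convex_closedBall 0 r hβ hb hhalf hhalf (by norm_num)) (hQ hq hq' hhalf hhalf (by norm_num))
    hmid
  rw [← smul_add, norm_smul] at hmid_norm
  norm_num at hmid_norm
  have hβr := hF.norm_eq_of_add_mem hne hβ hq hx
  have hbr := hF.norm_eq_of_add_mem hne hb hq' hx'
  exact eq_of_norm_eq_of_norm_add_eq (hβr.trans hbr.symm) (by linarith)

theorem IsExtreme.subset_singleton_add (hQ : Convex ℝ Q) (hFc : Convex ℝ F)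
    (hF : IsExtreme ℝ (closedBall 0 r + Q) F) (hne : F ≠ closedBall 0 r + Q) {b q₀ : E}
    (hb : b ∈ closedBall 0 r) (hq₀ : q₀ ∈ Q) (hx₀ : b + q₀ ∈ F) : F ⊆ {b} + Q := by
  intro x hx
  obtain ⟨β, hβ, q, hq, rfl⟩ := hF.subset hx
  rw [hF.eq_of_add_mem_of_add_mem hQ hFc hne hβ hb hq hq₀ hx hx₀]
  exact Set.add_mem_add rfl hq

end NormedSpace

theorem proper_faces_of_ball_plus_set_general {n : ℕ}
    (Q : Set (EuclideanSpace ℝ (Fin n)))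
    (hQconv : Convex ℝ Q)
    (C : Set (EuclideanSpace ℝ (Fin n))) (hC : C = closedBall 0 1 + Q)
    (F : Set (EuclideanSpace ℝ (Fin n)))
    (hF : IsFace C F) (hFne : F.Nonempty) (hFproper : F ≠ C) :
    ∃ (b : EuclideanSpace ℝ (Fin n)) (F_Q : Set (EuclideanSpace ℝ (Fin n))),
      ‖b‖ = 1 ∧ IsFace Q F_Q ∧ F = {b} + F_Q := by
  subst hC
  obtain ⟨hFconv, hFext⟩ := hF
  obtain ⟨x₀, hx₀⟩ := hFne
  obtain ⟨b, hb, q₀, hq₀, rfl⟩ := hFext.subset hx₀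
  refine ⟨b, Q ∩ (b + ·) ⁻¹' F, hFext.norm_eq_of_add_mem hFproper hb hq₀ hx₀,
    ⟨hQconv.inter (hFconv.translate_preimage_right b),
      hFext.inter_preimage_add fun q hq => Set.add_mem_add hb hq⟩, ?_⟩
  rw [Set.singleton_add, Set.image_inter_preimage, ← Set.singleton_add,
    Set.inter_eq_right.2 (hFext.subset_singleton_add hQconv hFconv hFproper hb hq₀ hx₀)]

theorem proper_faces_of_ball_plus_set {n : ℕ}
    (Q : Set (EuclideanSpace ℝ (Fin n)))
    (hQne : Q.Nonempty) (hQc : IsCompact Q) (hQconv : Convex ℝ Q)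
    (C : Set (EuclideanSpace ℝ (Fin n))) (hC : C = closedBall 0 1 + Q)
    (F : Set (EuclideanSpace ℝ (Fin n)))
    (hF : IsFace C F) (hFne : F.Nonempty) (hFproper : F ≠ C) :
    ∃ (b : EuclideanSpace ℝ (Fin n)) (F_Q : Set (EuclideanSpace ℝ (Fin n))),
      ‖b‖ = 1 ∧ IsFace Q F_Q ∧ F = {b} + F_Q :=
  proper_faces_of_ball_plus_set_general Q hQconv C hC F hF hFne hFproper
end

section
/- For any strictly increasing sequence of positive integers d₁ < d₂ < ⋯ < d_k, there exists a compact convex set C ⊆ ℝ^{d_k} such that the set of dimensions of positive-dimensional faces of C is exactly {d₁, d₂, …, d_k}. -/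
/-- The dimension of a convex set: the dimension of its affine hull. -/
noncomputable def setDim {n : ℕ} (A : Set (EuclideanSpace ℝ (Fin n))) : ℕ :=
  Module.finrank ℝ (affineSpan ℝ A).direction

/-!
Take `e = (0, d₁, …, d_k)`, `n = d_k`, and intersect the cylinders `‖P_{n - e_j} y‖ ≤ r_j`, where
`P_a` keeps the first `a` coordinates and the radii `r_j` decrease by at least `1` from one cylinder
to the next; the cylinder with `e_0 = 0` is a ball, which makes the body compact.

Given a face `F`, averaging finitely many points of `F` produces `x ∈ F` that is slack in every
constraint not tight on all of `F`. By strict convexity of Euclidean balls each tight projection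
is constant on `F`, while a small ball around `x` in the common kernel of the tight projections
stays in the body; extremality then makes `F` the slice of the body through `x` along that kernel.
The kernels are nested, so the dimension of `F` is one of the `e_j`. Conversely, the slice through
`r_j • e_{n - e_j - 1}` along `ker P_{n - e_j}` is a face of dimension `e_j`, thanks to the gaps
between the radii.
-/

open Metric Set Module Filter Topology

section StrictConvexity

variable {V : Type*} [NormedAddCommGroup V] [NormedSpace ℝ V] [StrictConvexSpace ℝ V]

lemma StrictConvexSpace.sphere_subset_extremePoints_closedBall' (x : V) (r : ℝ) :
    sphere x r ⊆ extremePoints ℝ (closedBall x r) := by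
  rcases eq_or_ne r 0 with rfl | hr
  · rw [sphere_zero, closedBall_zero, extremePoints_singleton]
  · exact StrictConvexSpace.sphere_subset_extremePoints_closedBall x hr

lemma Convex.subsingleton_of_subset_sphere {A : Set V} {x : V} {r : ℝ} (hA : Convex ℝ A)
    (hAr : A ⊆ sphere x r) : A.Subsingleton := by
  intro y hy z hz
  have hext := StrictConvexSpace.sphere_subset_extremePoints_closedBall' x r
    (hAr (hA.midpoint_mem hy hz))
  obtain ⟨hym, hzm⟩ := (mem_extremePoints.1 hext).2 y (sphere_subset_closedBall (hAr hy))
    z (sphere_subset_closedBall (hAr hz)) (midpoint_mem_openSegment y z)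
  exact hym.trans hzm.symm

end StrictConvexity

lemma IsExtreme.inter_preimage {𝕜 E V : Type*} [Ring 𝕜] [PartialOrder 𝕜] [IsOrderedRing 𝕜]
    [AddCommGroup E] [Module 𝕜 E] [AddCommGroup V] [Module 𝕜 V] {C : Set E} {D B : Set V}
    (f : E →ₗ[𝕜] V) (hCD : MapsTo f C D) (hB : IsExtreme 𝕜 D B) : IsExtreme 𝕜 C (C ∩ f ⁻¹' B) := by
  refine ⟨inter_subset_left, fun x₁ hx₁ x₂ hx₂ x hx hseg => ?_⟩
  have hfseg : f x ∈ openSegment 𝕜 (f x₁) (f x₂) :=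
    image_openSegment 𝕜 f.toAffineMap x₁ x₂ ▸ mem_image_of_mem _ hseg
  exact ⟨hx₁, hB.left_mem_of_mem_openSegment (hCD hx₁) (hCD hx₂) hx.2 hfseg⟩

lemma Convex.exists_forall_lt_of_exists_lt {ι E : Type*} [Finite ι] [AddCommGroup E]
    [Module ℝ E] {F : Set E} (hF : Convex ℝ F) (hne : F.Nonempty) {f : ι → E → ℝ}
    (hf : ∀ i, ConvexOn ℝ F (f i)) {b : ι → ℝ} (hb : ∀ i, ∀ y ∈ F, f i y ≤ b i) :
    ∃ x ∈ F, ∀ i, (∃ y ∈ F, f i y < b i) → f i x < b i := by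
  classical
  cases nonempty_fintype ι
  suffices ∀ s : Finset ι, ∃ x ∈ F, ∀ i ∈ s, (∃ y ∈ F, f i y < b i) → f i x < b i by
    obtain ⟨x, hx, h⟩ := this Finset.univ
    exact ⟨x, hx, fun i => h i (Finset.mem_univ i)⟩
  intro s
  induction s using Finset.induction_on with
  | empty => exact hne.imp fun x hx => ⟨hx, by simp⟩
  | insert i s _ ih =>
    obtain ⟨x, hx, hxs⟩ := ih
    by_cases hi : ∃ y ∈ F, f i y < b i
    · obtain ⟨y, hy, hyi⟩ := hi
      refine ⟨(1 / 2 : ℝ) • x + (1 / 2 : ℝ) • y, hF hx hy (by norm_num) (by norm_num) (by norm_num),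
        fun j hj hjex => ?_⟩
      have hmid := (hf j).2 hx hy (by norm_num : (0 : ℝ) ≤ 1 / 2) (by norm_num : (0 : ℝ) ≤ 1 / 2)
        (by norm_num)
      simp only [smul_eq_mul] at hmid
      have hjx := hb j x hx
      have hjy := hb j y hy
      rcases Finset.mem_insert.1 hj with rfl | hj
      · linarith
      · linarith [hxs j hj hjex]
    · refine ⟨x, hx, fun j hj hjex => ?_⟩
      rcases Finset.mem_insert.1 hj with rfl | hj
      · exact absurd hjex hi
      · exact hxs j hj hjex

section NormedSpace

variable {E : Type*} [NormedAddCommGroup E] [NormedSpace ℝ E]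

lemma direction_affineSpan_eq_of_ball_subset {F : Set E} {x : E} {W : Submodule ℝ E} {ε : ℝ}
    (hε : 0 < ε) (hball : ∀ w ∈ W, ‖w‖ < ε → x + w ∈ F) (hF : ∀ y ∈ F, y - x ∈ W) :
    (affineSpan ℝ F).direction = W := by
  apply le_antisymm
  · rw [← AffineSubspace.direction_mk' x W]
    refine AffineSubspace.direction_le (affineSpan_le.2 fun y hy => ?_)
    exact (AffineSubspace.mem_mk' ..).2 (hF y hy)
  · intro w hw
    obtain ⟨c, hc, hcw⟩ := exists_pos_mul_lt hε ‖w‖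
    have hmem (v : E) (hv : v ∈ W) (hvε : ‖v‖ < ε) : v ∈ (affineSpan ℝ F).direction := by
      have hxF : x ∈ F := by simpa using hball 0 W.zero_mem (by simpa)
      simpa using AffineSubspace.vsub_mem_direction
        (subset_affineSpan ℝ F (hball v hv hvε)) (subset_affineSpan ℝ F hxF)
    have := Submodule.smul_mem _ c⁻¹ (hmem (c • w) (W.smul_mem c hw)
      (by rwa [norm_smul, Real.norm_of_nonneg hc.le, mul_comm]))
    rwa [smul_smul, inv_mul_cancel₀ hc.ne', one_smul] at this

lemma IsExtreme.mem_of_ball_subset {C F : Set E} {x y : E} {W : Submodule ℝ E} {ε : ℝ}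
    (hF : IsExtreme ℝ C F) (hx : x ∈ F) (hε : 0 < ε) (hball : ∀ w ∈ W, ‖w‖ < ε → x + w ∈ C)
    (hy : y ∈ C) (hyW : y - x ∈ W) : y ∈ F := by
  obtain ⟨s, hs, hsε⟩ := exists_pos_mul_lt hε ‖x - y‖
  have hz : x + s • (x - y) ∈ C := by
    refine hball _ (W.smul_mem s ?_) ?_
    · simpa using W.neg_mem hyW
    · rwa [norm_smul, Real.norm_of_nonneg hs.le, mul_comm]
  -- `x` divides the segment from `y` to `x + s • (x - y)` in the ratio `1 : s`.
  have hseg : x ∈ openSegment ℝ y (x + s • (x - y)) := by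
    have h1s : 1 + s ≠ 0 := by positivity
    refine ⟨s / (1 + s), 1 / (1 + s), by positivity, by positivity, by field_simp; ring, ?_⟩
    match_scalars <;> field_simp
    ring
  exact hF.left_mem_of_mem_openSegment hy hz hx hseg

variable {V : Type*} [NormedAddCommGroup V] [NormedSpace ℝ V] [StrictConvexSpace ℝ V]

theorem IsExtreme.exists_direction_affineSpan_eq_iInf_ker [FiniteDimensional ℝ E]
    {ι : Type*} [Fintype ι] {L : ι → E →ₗ[ℝ] V} {r : ι → ℝ} {F : Set E}
    (hF : IsExtreme ℝ {y | ∀ i, ‖L i y‖ ≤ r i} F) (hFc : Convex ℝ F) (hne : F.Nonempty) :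
    ∃ T : Finset ι, (affineSpan ℝ F).direction = ⨅ i ∈ T, LinearMap.ker (L i) := by
  classical
  obtain ⟨x, hxF, hx⟩ := hFc.exists_forall_lt_of_exists_lt hne (f := fun i y => ‖L i y‖)
    (fun i => ((convexOn_norm convex_univ).comp_linearMap (L i)).subset
      (subset_univ F) hFc) (fun i y hy => hF.subset hy i)
  set T := Finset.univ.filter fun i => ∀ y ∈ F, ‖L i y‖ = r i
  have hconst : ∀ i ∈ T, ∀ y ∈ F, L i y = L i x := by
    intro i hi y hy
    refine (hFc.linear_image (L i)).subsingleton_of_subset_sphere (x := 0) (r := r i)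
      ?_ (mem_image_of_mem _ hy) (mem_image_of_mem _ hxF)
    rintro _ ⟨z, hz, rfl⟩
    simpa using (Finset.mem_filter.1 hi).2 z hz
  have hslack : ∀ i ∉ T, ‖L i x‖ < r i := by
    intro i hi
    simp only [T, Finset.mem_filter, Finset.mem_univ, true_and, not_forall] at hi
    obtain ⟨y, hy, hyi⟩ := hi
    exact hx i ⟨y, hy, (hF.subset hy i).lt_of_ne hyi⟩
  have hnear : ∀ᶠ w in 𝓝 (0 : E), ∀ i ∈ Tᶜ, ‖L i (x + w)‖ < r i :=
    (eventually_all_finset _).2 fun i hi =>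
      (show Continuous fun w => ‖L i (x + w)‖ by fun_prop).tendsto 0 |>.eventually
        (gt_mem_nhds (by simpa using hslack i (Finset.mem_compl.1 hi)))
  obtain ⟨ε, hε, hεslack⟩ := Metric.eventually_nhds_iff.1 hnear
  have hball : ∀ w ∈ ⨅ i ∈ T, LinearMap.ker (L i), ‖w‖ < ε →
      x + w ∈ {y | ∀ i, ‖L i y‖ ≤ r i} := by
    intro w hw hwε i
    by_cases hi : i ∈ T
    · have hwi : L i w = 0 := by
        simp only [Submodule.mem_iInf, LinearMap.mem_ker] at hw
        exact hw i hi
      simpa [hwi] using hF.subset hxF i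
    · exact (hεslack (by simpa using hwε) i (Finset.mem_compl.2 hi)).le
  refine ⟨T, direction_affineSpan_eq_of_ball_subset hε
    (fun w hw hwε => hF.mem_of_ball_subset hxF hε hball (hball w hw hwε) (by simpa using hw))
    fun y hy => ?_⟩
  simp only [Submodule.mem_iInf, LinearMap.mem_ker, map_sub]
  exact fun i hi => sub_eq_zero.2 (hconst i hi y hy)

end NormedSpace

section CoordProj

variable {n : ℕ}

def coordProj (n a : ℕ) : EuclideanSpace ℝ (Fin n) →ₗ[ℝ] EuclideanSpace ℝ (Fin n) where
  toFun x := WithLp.toLp 2 fun i => if (i : ℕ) < a then x i else 0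
  map_add' x y := by ext i; by_cases h : (i : ℕ) < a <;> simp [h]
  map_smul' c x := by ext i; by_cases h : (i : ℕ) < a <;> simp [h]

@[simp] lemma coordProj_apply (a : ℕ) (x : EuclideanSpace ℝ (Fin n)) (i : Fin n) :
    coordProj n a x i = if (i : ℕ) < a then x i else 0 := rfl

lemma norm_coordProj_le (a : ℕ) (x : EuclideanSpace ℝ (Fin n)) : ‖coordProj n a x‖ ≤ ‖x‖ := by
  rw [EuclideanSpace.norm_eq, EuclideanSpace.norm_eq]
  refine Real.sqrt_le_sqrt (Finset.sum_le_sum fun i _ => ?_)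
  by_cases h : (i : ℕ) < a <;> simp [h, sq_nonneg]

lemma coordProj_of_le {a : ℕ} (h : n ≤ a) (x : EuclideanSpace ℝ (Fin n)) : coordProj n a x = x := by
  ext i
  simp [i.2.trans_le h]

lemma coordProj_single (a : ℕ) (c : Fin n) (t : ℝ) :
    coordProj n a (EuclideanSpace.single c t) =
      if (c : ℕ) < a then EuclideanSpace.single c t else 0 := by
  ext i
  by_cases hi : i = c
  · subst hi; split_ifs <;> simp [*]
  · split_ifs <;> simp [hi]

lemma mem_ker_coordProj {a : ℕ} {x : EuclideanSpace ℝ (Fin n)} :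
    x ∈ LinearMap.ker (coordProj n a) ↔ ∀ i : Fin n, (i : ℕ) < a → x i = 0 := by
  simp only [LinearMap.mem_ker, PiLp.ext_iff, coordProj_apply]
  refine forall_congr' fun i => ?_
  split_ifs with h <;> simp [h]

lemma iInf_ker_coordProj {ι : Type*} (T : Finset ι) (a : ι → ℕ) :
    ⨅ i ∈ T, LinearMap.ker (coordProj n (a i)) =
      LinearMap.ker (coordProj n (T.sup a)) := by
  ext x
  simp only [Submodule.mem_iInf, mem_ker_coordProj, Finset.lt_sup_iff]
  grind

lemma finrank_ker_coordProj (a : ℕ) :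
    finrank ℝ (LinearMap.ker (coordProj n a)) = n - a := by
  let e : LinearMap.ker (coordProj n a) ≃ₗ[ℝ] (Fin (n - a) → ℝ) :=
    { toFun z i := z.1 ⟨a + i, by omega⟩
      map_add' _ _ := rfl
      map_smul' _ _ := rfl
      invFun f := ⟨WithLp.toLp 2 fun i => if h : a ≤ (i : ℕ) then f ⟨i - a, by omega⟩ else 0,
        mem_ker_coordProj.2 fun i hi => by simp [Nat.not_le.2 hi]⟩
      left_inv z := by
        ext i
        by_cases hi : a ≤ (i : ℕ)
        · simp only [hi, dif_pos]
          exact congrArg z.1 (Fin.ext (by simp; omega))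
        · simp only [hi, dif_neg, not_false_eq_true]
          exact (mem_ker_coordProj.1 z.2 i (by omega)).symm
      right_inv f := by
        funext i
        simp only [Nat.le_add_right, dif_pos, add_tsub_cancel_left] }
  rw [e.finrank_eq, finrank_fin_fun]

end CoordProj

lemma Set.Nonempty.of_setDim_pos {n : ℕ} {F : Set (EuclideanSpace ℝ (Fin n))}
    (h : 0 < setDim F) : F.Nonempty := by
  contrapose! h
  simp [h, setDim]

section NestedCylinders

variable {ι : Type*} {n : ℕ} {e : ι → ℕ} {r : ι → ℝ}

-- The `j`-th constraint leaves the `e j` last coordinates free.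
def nestedCylinders (n : ℕ) (e : ι → ℕ) (r : ι → ℝ) : Set (EuclideanSpace ℝ (Fin n)) :=
  {y | ∀ j, ‖coordProj n (n - e j) y‖ ≤ r j}

lemma convex_nestedCylinders : Convex ℝ (nestedCylinders n e r) := by
  simp only [nestedCylinders, ofPred_forall]
  exact convex_iInter fun j => by
    simpa using ((convexOn_norm convex_univ).comp_linearMap (coordProj n (n - e j))).convex_le (r j)

lemma isCompact_nestedCylinders (h0 : ∃ j, e j = 0) : IsCompact (nestedCylinders n e r) := by
  obtain ⟨j, hj⟩ := h0
  refine Metric.isCompact_of_isClosed_isBounded ?_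
    ((isBounded_closedBall (x := 0) (r := r j)).subset fun y hy => ?_)
  · simp only [nestedCylinders, ofPred_forall]
    exact isClosed_iInter fun i =>
      isClosed_le (coordProj n _).continuous_of_finiteDimensional.norm continuous_const
  · simpa [hj, coordProj_of_le le_rfl] using hy j

lemma mem_nestedCylinders_of_norm_lt_one (hr : ∀ j, 1 ≤ r j) {w : EuclideanSpace ℝ (Fin n)}
    (hw : ‖w‖ < 1) : w ∈ nestedCylinders n e r :=
  fun j => ((norm_coordProj_le _ w).trans hw.le).trans (hr j)

lemma setDim_mem_range_of_isFace_nestedCylinders [Fintype ι] (hle : ∀ j, e j ≤ n)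
    (htop : n ∈ range e) {F : Set (EuclideanSpace ℝ (Fin n))}
    (hF : IsFace (nestedCylinders n e r) F) (hne : F.Nonempty) : setDim F ∈ range e := by
  obtain ⟨T, hT⟩ := hF.2.exists_direction_affineSpan_eq_iInf_ker hF.1 hne
  rw [setDim, hT, iInf_ker_coordProj T (fun j => n - e j), finrank_ker_coordProj]
  rcases T.eq_empty_or_nonempty with rfl | hTne
  · simpa using htop
  · obtain ⟨j, -, hj⟩ := T.exists_mem_eq_sup hTne fun j => n - e j
    exact ⟨j, by rw [hj]; have := hle j; omega⟩

variable [LinearOrder ι]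

lemma single_add_mem_nestedCylinders (he : StrictMono e) (hr : ∀ j, 1 ≤ r j)
    (hgap : ∀ i j, i < j → r j + 1 ≤ r i) {j : ι} (hj : e j < n) {w : EuclideanSpace ℝ (Fin n)}
    (hw : w ∈ LinearMap.ker (coordProj n (n - e j))) (hw1 : ‖w‖ < 1) :
    EuclideanSpace.single ⟨n - e j - 1, by omega⟩ (r j) + w ∈ nestedCylinders n e r := by
  set x := EuclideanSpace.single (⟨n - e j - 1, by omega⟩ : Fin n) (r j)
  have hx : ‖x‖ = r j := by simp [x, abs_of_pos (one_pos.trans_le (hr j))]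
  intro i
  rcases lt_trichotomy i j with hij | rfl | hji
  · calc ‖coordProj n (n - e i) (x + w)‖ ≤ ‖x + w‖ := norm_coordProj_le _ _
      _ ≤ r j + 1 := by linarith [norm_add_le x w]
      _ ≤ r i := hgap i j hij
  · have hPx : coordProj n (n - e i) x = x := by rw [coordProj_single, if_pos (by simp; omega)]
    rw [map_add, LinearMap.mem_ker.1 hw, add_zero, hPx, hx]
  · have hPx : coordProj n (n - e i) x = 0 := by
      have := he hji
      rw [coordProj_single, if_neg (by simp; omega)]
    rw [map_add, hPx, zero_add]
    exact ((norm_coordProj_le _ w).trans hw1.le).trans (hr i)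

lemma exists_isFace_nestedCylinders_setDim_eq (he : StrictMono e) (hle : ∀ j, e j ≤ n)
    (hr : ∀ j, 1 ≤ r j) (hgap : ∀ i j, i < j → r j + 1 ≤ r i) (j : ι) :
    ∃ F, IsFace (nestedCylinders n e r) F ∧ setDim F = e j := by
  rcases (hle j).eq_or_lt with hj | hj
  · refine ⟨_, ⟨convex_nestedCylinders, IsExtreme.rfl⟩, ?_⟩
    rw [setDim, direction_affineSpan_eq_of_ball_subset (x := 0) (W := ⊤) one_pos
      (fun w _ hw => by simpa using mem_nestedCylinders_of_norm_lt_one hr hw)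
      (fun _ _ => Submodule.mem_top), finrank_top, finrank_euclideanSpace_fin, hj]
  set P := coordProj n (n - e j)
  set x := EuclideanSpace.single (⟨n - e j - 1, by omega⟩ : Fin n) (r j)
  have hx : ‖x‖ = r j := by simp [x, abs_of_pos (one_pos.trans_le (hr j))]
  have hPx : P x = x := by rw [coordProj_single, if_pos (by simp; omega)]
  have hext : IsExtreme ℝ (closedBall 0 (r j)) {x} :=
    isExtreme_singleton.2 <|
      StrictConvexSpace.sphere_subset_extremePoints_closedBall' 0 (r j) (by simpa using hx)
  refine ⟨nestedCylinders n e r ∩ P ⁻¹' {x},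
    ⟨convex_nestedCylinders.inter ((convex_singleton x).linear_preimage P),
      hext.inter_preimage P fun y hy => by simpa using hy j⟩, ?_⟩
  have hball (w) (hw : w ∈ LinearMap.ker P) (hw1 : ‖w‖ < 1) :
      x + w ∈ nestedCylinders n e r ∩ P ⁻¹' {x} :=
    ⟨single_add_mem_nestedCylinders he hr hgap hj hw hw1, by simp [LinearMap.mem_ker.1 hw, hPx]⟩
  rw [setDim, direction_affineSpan_eq_of_ball_subset one_pos hball
    (fun y hy => by simpa [sub_eq_zero, hPx] using hy.2), finrank_ker_coordProj]
  omega

end NestedCylinders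

theorem all_face_patterns_realisable {k : ℕ} (d : Fin (k + 1) → ℕ)
    (hmono : StrictMono d) (hpos : ∀ i, 0 < d i) :
    ∃ C : Set (EuclideanSpace ℝ (Fin (d (Fin.last k)))),
      IsCompact C ∧ Convex ℝ C ∧
        {m : ℕ | ∃ F, IsFace C F ∧ 0 < setDim F ∧ setDim F = m} = Set.range d := by
  set e : Fin (k + 2) → ℕ := Fin.cons 0 d
  have he : StrictMono e := Fin.strictMono_cons.2 ⟨hpos, hmono⟩
  have hlast : e (Fin.last (k + 1)) = d (Fin.last k) := by simp [e, ← Fin.succ_last]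
  have hle : ∀ j, e j ≤ d (Fin.last k) := fun j => hlast ▸ he.monotone (Fin.le_last j)
  set r : Fin (k + 2) → ℝ := fun j => (j.rev : ℕ) + 1
  have hgap : ∀ i j, i < j → r j + 1 ≤ r i := fun i j hij => by
    have : (j.rev : ℕ) + 1 ≤ i.rev := Fin.rev_lt_rev.2 hij
    simp only [r]
    exact_mod_cast Nat.add_le_add_right this 1
  refine ⟨nestedCylinders _ e r, isCompact_nestedCylinders ⟨0, rfl⟩, convex_nestedCylinders, ?_⟩
  ext m
  constructor
  · rintro ⟨F, hF, hFpos, rfl⟩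
    obtain ⟨j, hj⟩ := setDim_mem_range_of_isFace_nestedCylinders hle ⟨_, hlast⟩ hF
      (.of_setDim_pos hFpos)
    induction j using Fin.cases with
    | zero => simp [e, ← hj] at hFpos
    | succ j => exact ⟨j, by simpa [e] using hj⟩
  · rintro ⟨j, rfl⟩
    obtain ⟨F, hF, hFdim⟩ := exists_isFace_nestedCylinders_setDim_eq he hle
      (fun j => by simp [r]) hgap j.succ
    simp only [e, Fin.cons_succ] at hFdim
    exact ⟨F, hF, hFdim ▸ hpos j, hFdim⟩
end

section
/- Let C ⊆ ℝ³ be the convex hull of the unit circle {(x,y,0) : x² + y² = 1} together with the two points (0,0,1) and (0,0,−1). Then C has faces of dimensions 0, 1 and 3, but no face of dimension 2. -/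
/-
`C` is the closed unit ball of the norm `‖(x₀, x₁)‖ + |x₂|` on `ℝ³`, a double cone over the unit
disc. The pole `(0,0,1)` and the edge from `(1,0,0)` to the pole are exposed by the functionals
`x₂` and `x₀ + x₂`, and `C`, having interior, has dimension 3. A face containing an interior point
is all of `C`. Any other face `F` lies in the unit sphere, so the midpoint of two points of `F` has
norm one: both triangle inequalities (horizontal and vertical) are equalities. Hence the
horizontal parts of the points of `F` lie on one ray and their heights have one sign, which puts
`F` on a single generating line of the cone.
-/

open Set Topology

section ConvexFaces

variable {E : Type*} [AddCommGroup E] [Module ℝ E] [TopologicalSpace E]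

theorem IsExtreme.eq_of_mem_interior_s15 [ContinuousAdd E] [ContinuousSMul ℝ E] {A B : Set E}
    (h : IsExtreme ℝ A B) {z : E} (hzB : z ∈ B) (hzA : z ∈ interior A) : B = A := by
  refine h.subset.antisymm fun y hy => ?_
  have hbeyond : ∀ᶠ t in 𝓝[>] (0 : ℝ), z + t • (z - y) ∈ A := by
    refine nhdsWithin_le_nhds ((Continuous.tendsto' ?_ 0 z (by simp)).eventually
      (mem_interior_iff_mem_nhds.mp hzA))
    fun_prop
  obtain ⟨ε, hεA, hε⟩ := (hbeyond.and self_mem_nhdsWithin).exists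
  -- `z` lies strictly between `y` and the point `z + ε • (z - y)` beyond it
  refine h.left_mem_of_mem_openSegment hy hεA hzB
    ⟨ε / (1 + ε), 1 / (1 + ε), by positivity, by positivity, by field_simp; ring, ?_⟩
  match_scalars <;> field_simp; ring

theorem isExposed_setOf_eq_of_forall_le {A : Set E} (l : StrongDual ℝ E) {a : ℝ}
    (hle : ∀ x ∈ A, l x ≤ a) : IsExposed ℝ A {x ∈ A | l x = a} :=
  fun ⟨x₀, hx₀A, hx₀⟩ => ⟨l, Set.ext fun x =>
    ⟨fun ⟨hx, hlx⟩ => ⟨hx, fun y hy => hlx ▸ hle y hy⟩,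
     fun ⟨hx, hmax⟩ => ⟨hx, le_antisymm (hle x hx) (hx₀ ▸ hmax x₀ hx₀A)⟩⟩⟩

end ConvexFaces

section EuclideanFaces

variable {n : ℕ}

theorem isFace_setOf_eq_of_forall_le {C : Set (EuclideanSpace ℝ (Fin n))} (hC : Convex ℝ C)
    (l : StrongDual ℝ (EuclideanSpace ℝ (Fin n))) {a : ℝ} (hle : ∀ x ∈ C, l x ≤ a) :
    IsFace C {x ∈ C | l x = a} :=
  ⟨(isExposed_setOf_eq_of_forall_le l hle).convex hC,
    (isExposed_setOf_eq_of_forall_le l hle).isExtreme⟩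

theorem setDim_singleton (p : EuclideanSpace ℝ (Fin n)) : setDim {p} = 0 := by
  rw [setDim, direction_affineSpan, vectorSpan_singleton, finrank_bot]

theorem setDim_segment {p q : EuclideanSpace ℝ (Fin n)} (h : p ≠ q) :
    setDim (segment ℝ p q) = 1 := by
  rw [setDim, ← convexHull_pair, affineSpan_convexHull, direction_affineSpan, vectorSpan_pair,
    finrank_span_singleton (vsub_ne_zero.mpr h)]

theorem setDim_eq_of_interior_nonempty {A : Set (EuclideanSpace ℝ (Fin n))}
    (h : (interior A).Nonempty) : setDim A = n := by
  have htop : affineSpan ℝ A = ⊤ :=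
    top_unique ((isOpen_interior.affineSpan_eq_top h).ge.trans (affineSpan_mono ℝ interior_subset))
  rw [setDim, htop, AffineSubspace.direction_top,
    finrank_top, finrank_euclideanSpace_fin]

theorem setDim_le_one_of_forall_eq_add_smul {A : Set (EuclideanSpace ℝ (Fin n))}
    (p v : EuclideanSpace ℝ (Fin n)) (h : ∀ x ∈ A, ∃ t : ℝ, x = p + t • v) : setDim A ≤ 1 := by
  have hspan : vectorSpan ℝ A ≤ ℝ ∙ v := by
    rw [vectorSpan_def, Submodule.span_le]
    rintro _ ⟨x, hx, y, hy, rfl⟩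
    obtain ⟨s, rfl⟩ := h x hx
    obtain ⟨t, rfl⟩ := h y hy
    exact Submodule.mem_span_singleton.mpr ⟨s - t, by simp only [vsub_eq_sub]; module⟩
  rw [setDim, direction_affineSpan]
  exact (Submodule.finrank_mono hspan).trans ((finrank_span_le_card {v}).trans (by simp))

end EuclideanFaces

theorem exists_forall_eq_norm_smul_of_sameRay {E : Type*} [NormedAddCommGroup E]
    [NormedSpace ℝ E] {S : Set E} (hS : ∀ x ∈ S, ∀ y ∈ S, SameRay ℝ x y) :
    ∃ u : E, ∀ x ∈ S, x = ‖x‖ • u := by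
  by_cases h : ∃ x₀ ∈ S, x₀ ≠ 0
  · obtain ⟨x₀, hx₀S, hx₀⟩ := h
    refine ⟨‖x₀‖⁻¹ • x₀, fun x hx => ?_⟩
    rw [smul_smul, mul_comm, ← smul_smul, ← (hS x₀ hx₀S x hx).norm_smul_eq,
      inv_smul_smul₀ (norm_ne_zero_iff.mpr hx₀)]
  · push Not at h
    exact ⟨0, fun x hx => by simp [h x hx]⟩

local notation "ℝ³" => EuclideanSpace ℝ (Fin 3)

namespace DoubleCone

def horiz : ℝ³ →ₗ[ℝ] ℂ where
  toFun x := ⟨x 0, x 1⟩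
  map_add' _ _ := rfl
  map_smul' _ _ := by apply Complex.ext <;> simp

def lift : ℂ →ₗ[ℝ] ℝ³ where
  toFun z := !₂[z.re, z.im, 0]
  map_add' _ _ := by ext i; fin_cases i <;> simp
  map_smul' _ _ := by ext i; fin_cases i <;> simp

def north : ℝ³ := !₂[0, 0, 1]

def east : ℝ³ := !₂[1, 0, 0]

@[simp] lemma horiz_re (x : ℝ³) : (horiz x).re = x 0 := rfl
@[simp] lemma horiz_im (x : ℝ³) : (horiz x).im = x 1 := rfl

lemma lift_horiz_add (x : ℝ³) : lift (horiz x) + x 2 • north = x := by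
  ext i; fin_cases i <;> simp [lift, north]

lemma norm_horiz_sq (x : ℝ³) : ‖horiz x‖ ^ 2 = x 0 ^ 2 + x 1 ^ 2 := by
  rw [Complex.sq_norm, Complex.normSq_apply, horiz_re, horiz_im]; ring

noncomputable def coneNorm (x : ℝ³) : ℝ := ‖horiz x‖ + |x 2|

def coneBall : Set ℝ³ := {x | coneNorm x ≤ 1}

lemma convexOn_coneNorm : ConvexOn ℝ univ coneNorm :=
  ((convexOn_norm convex_univ).comp_linearMap horiz).add
    ((convexOn_norm convex_univ).comp_linearMap (EuclideanSpace.proj 2 : ℝ³ →L[ℝ] ℝ).toLinearMap)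

lemma continuous_coneNorm : Continuous coneNorm :=
  (horiz.continuous_of_finiteDimensional.norm).add (EuclideanSpace.proj (2 : Fin 3)).continuous.abs

lemma coneNorm_smul (c : ℝ) (x : ℝ³) : coneNorm (c • x) = |c| * coneNorm x := by
  simp only [coneNorm, map_smul, norm_smul, Real.norm_eq_abs, PiLp.smul_apply, smul_eq_mul,
    abs_mul]
  ring

lemma sameRay_of_coneNorm_add_eq {x y : ℝ³} (h : coneNorm (x + y) = coneNorm x + coneNorm y) :
    SameRay ℝ (horiz x) (horiz y) ∧ SameRay ℝ (x 2) (y 2) := by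
  have hhoriz := norm_add_le (horiz x) (horiz y)
  have hvert := norm_add_le (x 2) (y 2)
  simp only [coneNorm, map_add, PiLp.add_apply, ← Real.norm_eq_abs] at h
  exact ⟨sameRay_iff_norm_add.mpr (by linarith), sameRay_iff_norm_add.mpr (by linarith)⟩

def generators : Set ℝ³ :=
  {x | x 0 ^ 2 + x 1 ^ 2 = 1 ∧ x 2 = 0} ∪ {x | x 0 = 0 ∧ x 1 = 0 ∧ (x 2 = 1 ∨ x 2 = -1)}

lemma coneNorm_eq_one_of_mem_generators {x : ℝ³} (hx : x ∈ generators) : coneNorm x = 1 := by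
  rcases hx with ⟨hcircle, h2⟩ | ⟨h0, h1, h2⟩
  · have : ‖horiz x‖ = 1 := by
      rw [← pow_eq_one_iff_of_nonneg (norm_nonneg _) two_ne_zero, norm_horiz_sq, hcircle]
    simp [coneNorm, this, h2]
  · have : horiz x = 0 := Complex.ext h0 h1
    rcases h2 with h2 | h2 <;> simp [coneNorm, this, h2]

lemma lift_mem_generators {u : ℂ} (hu : ‖u‖ = 1) : lift u ∈ generators := by
  have h := Complex.sq_norm u
  rw [hu, Complex.normSq_apply] at h
  exact Or.inl ⟨by change u.re ^ 2 + u.im ^ 2 = 1; linarith, rfl⟩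

lemma mem_convexHull_generators {x : ℝ³} (hx : coneNorm x ≤ 1) : x ∈ convexHull ℝ generators := by
  set r := ‖horiz x‖
  set u := Complex.exp (Complex.arg (horiz x) * Complex.I)
  have hu : ‖u‖ = 1 := Complex.norm_exp_ofReal_mul_I _
  have hxu : horiz x = r • u := by
    rw [Complex.real_smul]; exact (Complex.norm_mul_exp_arg_mul_I _).symm
  -- the vertical part `x 2 • north` is split between the two poles
  have hx_eq : x = ∑ i : Fin 3, ![r, (1 - r + x 2) / 2, (1 - r - x 2) / 2] i •
      ![lift u, north, -north] i := by
    conv_lhs => rw [← lift_horiz_add x, hxu]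
    simp only [Fin.sum_univ_three, Matrix.cons_val, map_smul]
    module
  have hr : r ≤ 1 - |x 2| := by simp only [coneNorm] at hx; linarith
  rw [hx_eq]
  refine (convex_convexHull ℝ _).sum_mem (fun i _ => ?_) ?_ (fun i _ => subset_convexHull ℝ _ ?_)
  · have := abs_le.mp (le_sub_comm.mp hr)
    fin_cases i
    · exact norm_nonneg _
    · show 0 ≤ (1 - r + x 2) / 2; linarith
    · show 0 ≤ (1 - r - x 2) / 2; linarith
  · simp only [Fin.sum_univ_three, Matrix.cons_val]; ring
  · fin_cases i
    · exact lift_mem_generators hu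
    · exact Or.inr ⟨rfl, rfl, Or.inl rfl⟩
    · exact Or.inr ⟨by simp [north], by simp [north], Or.inr (by simp [north])⟩

lemma north_mem_generators : north ∈ generators := Or.inr ⟨rfl, rfl, Or.inl rfl⟩

lemma east_mem_generators : east ∈ generators := Or.inl ⟨by simp [east], rfl⟩

lemma convex_coneBall : Convex ℝ coneBall := by
  simpa [coneBall] using convexOn_coneNorm.convex_le 1

lemma convexHull_generators : convexHull ℝ generators = coneBall :=
  (convexHull_min (fun _ hx => (coneNorm_eq_one_of_mem_generators hx).le)
    convex_coneBall).antisymm fun _ hx => mem_convexHull_generators hx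

lemma setOf_coneNorm_lt_subset_interior_coneBall :
    {x | coneNorm x < 1} ⊆ interior coneBall :=
  interior_maximal (fun _ (hx : coneNorm _ < 1) => hx.le)
    (isOpen_lt continuous_coneNorm continuous_const)

lemma coneBall_sep_proj_two_eq_one :
    {x ∈ coneBall | EuclideanSpace.proj 2 x = 1} = {north} := by
  ext x
  refine ⟨fun ⟨(hx : coneNorm x ≤ 1), (h2 : x 2 = 1)⟩ => ?_, ?_⟩
  · have : horiz x = 0 := by
      rw [coneNorm, h2, abs_one] at hx
      exact norm_le_zero_iff.mp (by linarith)
    rw [← lift_horiz_add x, this, h2, map_zero, zero_add, one_smul, mem_singleton_iff]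
  · rintro rfl
    exact ⟨(coneNorm_eq_one_of_mem_generators north_mem_generators).le, rfl⟩

lemma coneBall_sep_proj_zero_add_proj_two_eq_one :
    {x ∈ coneBall |
      (EuclideanSpace.proj 0 + EuclideanSpace.proj 2 : StrongDual ℝ ℝ³) x = 1} =
      segment ℝ east north := by
  ext x
  refine ⟨fun ⟨(hx : coneNorm x ≤ 1), (h02 : x 0 + x 2 = 1)⟩ => ?_, fun hx => ⟨?_, ?_⟩⟩
  · rw [coneNorm] at hx
    have h0 : x 0 ≤ ‖horiz x‖ := Complex.re_le_norm (horiz x)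
    have h2 := le_abs_self (x 2)
    have h1 : x 1 = 0 := by
      have hsq := norm_horiz_sq x
      rw [show ‖horiz x‖ = x 0 by linarith] at hsq
      exact pow_eq_zero_iff two_ne_zero |>.mp (by linarith)
    refine ⟨x 0, x 2, by linarith [norm_nonneg (horiz x)], by linarith [abs_nonneg (x 2)], h02, ?_⟩
    ext i; fin_cases i <;> simp [east, north, h1]
  · exact convex_coneBall.segment_subset
      (coneNorm_eq_one_of_mem_generators east_mem_generators).le
      (coneNorm_eq_one_of_mem_generators north_mem_generators).le hx
  · obtain ⟨a, b, -, -, hab, rfl⟩ := hx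
    simpa [east, north] using hab

lemma setDim_le_one_of_forall_coneNorm_eq_one {F : Set ℝ³} (hF : Convex ℝ F)
    (hF1 : ∀ x ∈ F, coneNorm x = 1) : setDim F ≤ 1 := by
  have hray : ∀ a ∈ F, ∀ b ∈ F, SameRay ℝ (horiz a) (horiz b) ∧ SameRay ℝ (a 2) (b 2) := by
    intro a ha b hb
    refine sameRay_of_coneNorm_add_eq ?_
    have hhalf : (0 : ℝ) ≤ 1 / 2 := by norm_num
    have hmid := hF1 _ (hF ha hb hhalf hhalf (add_halves 1))
    rw [← smul_add, coneNorm_smul, abs_of_pos (by norm_num : (0 : ℝ) < 1 / 2)] at hmid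
    rw [hF1 a ha, hF1 b hb]
    linarith
  obtain ⟨u, hu⟩ := exists_forall_eq_norm_smul_of_sameRay (S := horiz '' F)
    (forall_mem_image.2 fun a ha => forall_mem_image.2 fun b hb => (hray a ha b hb).1)
  obtain ⟨σ, hσ⟩ := exists_forall_eq_norm_smul_of_sameRay (S := (· 2) '' F)
    (forall_mem_image.2 fun a ha => forall_mem_image.2 fun b hb => (hray a ha b hb).2)
  refine setDim_le_one_of_forall_eq_add_smul (lift u) (σ • north - lift u) fun a ha => ⟨|a 2|, ?_⟩
  have hnorm : ‖horiz a‖ = 1 - |a 2| := by rw [← hF1 a ha, coneNorm]; ring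
  conv_lhs => rw [← lift_horiz_add a, hu _ (mem_image_of_mem _ ha), hσ _ (mem_image_of_mem _ ha)]
  rw [hnorm, Real.norm_eq_abs, map_smul]
  module

lemma isFace_coneBall_north : IsFace coneBall {north} := by
  rw [← coneBall_sep_proj_two_eq_one]
  refine isFace_setOf_eq_of_forall_le convex_coneBall _ fun x (hx : coneNorm x ≤ 1) => ?_
  change x 2 ≤ 1
  rw [coneNorm] at hx
  linarith [le_abs_self (x 2), norm_nonneg (horiz x)]

lemma isFace_coneBall_segment_east_north : IsFace coneBall (segment ℝ east north) := by
  rw [← coneBall_sep_proj_zero_add_proj_two_eq_one]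
  refine isFace_setOf_eq_of_forall_le convex_coneBall _ fun x (hx : coneNorm x ≤ 1) => ?_
  change x 0 + x 2 ≤ 1
  rw [coneNorm] at hx
  linarith [le_abs_self (x 2), show x 0 ≤ ‖horiz x‖ from Complex.re_le_norm (horiz x)]

lemma interior_coneBall_nonempty : (interior coneBall).Nonempty :=
  ⟨0, setOf_coneNorm_lt_subset_interior_coneBall (by simp [coneNorm])⟩

lemma setDim_ne_two_of_isFace_coneBall {F : Set ℝ³} (hF : IsFace coneBall F) : setDim F ≠ 2 := by
  by_cases hint : ∃ z ∈ F, coneNorm z < 1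
  · obtain ⟨z, hzF, hz⟩ := hint
    rw [hF.2.eq_of_mem_interior_s15 hzF (setOf_coneNorm_lt_subset_interior_coneBall hz),
      setDim_eq_of_interior_nonempty interior_coneBall_nonempty]
    decide
  · push Not at hint
    have := setDim_le_one_of_forall_coneNorm_eq_one hF.1 fun x hx =>
      (hF.2.subset hx).antisymm (hint x hx)
    omega

end DoubleCone

theorem circle_with_two_poles_face_dims
    (C : Set (EuclideanSpace ℝ (Fin 3)))
    (hC : C = convexHull ℝ
      ({x : EuclideanSpace ℝ (Fin 3) | x 0 ^ 2 + x 1 ^ 2 = 1 ∧ x 2 = 0} ∪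
       {x : EuclideanSpace ℝ (Fin 3) | x 0 = 0 ∧ x 1 = 0 ∧ (x 2 = 1 ∨ x 2 = -1)})) :
    (∃ F, IsFace C F ∧ F.Nonempty ∧ setDim F = 0) ∧
      (∃ F, IsFace C F ∧ setDim F = 1) ∧
      (∃ F, IsFace C F ∧ setDim F = 3) ∧
      ¬∃ F, IsFace C F ∧ setDim F = 2 := by
  open DoubleCone in
  obtain rfl : C = coneBall := hC.trans convexHull_generators
  have heast_ne_north : east ≠ north := fun h => by simpa [east, north] using congr($h 0)
  exact ⟨⟨{north}, isFace_coneBall_north, singleton_nonempty _, setDim_singleton _⟩,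
    ⟨_, isFace_coneBall_segment_east_north, setDim_segment heast_ne_north⟩,
    ⟨_, ⟨convex_coneBall, .rfl⟩, setDim_eq_of_interior_nonempty
      interior_coneBall_nonempty⟩,
    fun ⟨_, hF, hdim⟩ => setDim_ne_two_of_isFace_coneBall hF hdim⟩
end

section
/- Let B be the closed unit ball of ℝ³ and H = {x : x₃ ≤ 1/2}. Then C = B ∩ H has faces of dimensions 0, 2 and 3, and no face of dimension 1. -/
open Metric

/-!
The top disk `x 2 = 1 / 2` is the face exposed by the third coordinate, and the points of the unit
sphere below the cutting plane are extreme points by strict convexity of the ball. Conversely, two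
distinct points of a face have their midpoint `m` in the open ball, again by strict convexity.
Near `m` only the constraint `x 2 ≤ 1 / 2` can be active, so the segment from any point `d` of
`C` to `m` extends a little beyond `m` inside `C`, unless `m` lies on the top plane and `d` does
not. Extremality then puts `d` in the face: the face is all of `C` when `m` is below the plane and
contains the top disk when `m` is on it, so its dimension is 3 or at least 2.
-/

open Filter Topology

theorem IsExtreme.mem_of_eventually_add_smul_sub_mem {E : Type*} [AddCommGroup E] [Module ℝ E]
    {C F : Set E} {m d : E} (hF : IsExtreme ℝ C F) (hm : m ∈ F) (hd : d ∈ C)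
    (h : ∀ᶠ t in 𝓝[>] (0 : ℝ), m + t • (m - d) ∈ C) : d ∈ F := by
  obtain ⟨t, hz, ht : 0 < t⟩ := (h.and self_mem_nhdsWithin).exists
  -- `m` divides the segment from `d` to `m + t • (m - d)` in the ratio `t : 1`.
  have hseg : m ∈ openSegment ℝ d (m + t • (m - d)) :=
    ⟨t / (1 + t), 1 / (1 + t), by positivity, by positivity, by field_simp; ring,
      by match_scalars
         · field_simp; ring
         · field_simp⟩
  exact hF.left_mem_of_mem_openSegment hd hz hm hseg

section setDim

variable {n : ℕ} {A B : Set (EuclideanSpace ℝ (Fin n))}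

theorem setDim_mono (h : A ⊆ B) : setDim A ≤ setDim B := by
  rw [setDim, setDim, direction_affineSpan, direction_affineSpan]
  exact Submodule.finrank_mono (vectorSpan_mono ℝ h)

theorem setDim_eq_zero_of_subsingleton (h : A.Subsingleton) : setDim A = 0 := by
  simp [setDim, direction_affineSpan, vectorSpan_of_subsingleton ℝ h]

theorem setDim_eq_of_nonempty_interior (h : (interior A).Nonempty) : setDim A = n := by
  have hspan : affineSpan ℝ A = ⊤ :=
    affineSpan_eq_top_of_nonempty_interior (h.mono (interior_mono (subset_convexHull ℝ A)))
  rw [setDim, hspan, AffineSubspace.direction_top, finrank_top, finrank_euclideanSpace_fin]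

theorem setDim_lt_of_subset_hyperplane {f : EuclideanSpace ℝ (Fin n) →ₗ[ℝ] ℝ} (hf : f ≠ 0)
    {c : ℝ} (h : A ⊆ {x | f x = c}) : setDim A < n := by
  have hle : vectorSpan ℝ A ≤ LinearMap.ker f := by
    rw [vectorSpan_def, Submodule.span_le]
    rintro _ ⟨x, hx, y, hy, rfl⟩
    simp [show f x = c from h hx, show f y = c from h hy]
  have hne : vectorSpan ℝ A ≠ ⊤ := fun htop ↦
    hf (LinearMap.ker_eq_top.1 (top_le_iff.1 (htop ▸ hle)))
  rw [setDim, direction_affineSpan]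
  simpa using Submodule.finrank_lt hne

theorem le_setDim_of_add_mem {k : ℕ} {v : Fin k → EuclideanSpace ℝ (Fin n)}
    (hv : LinearIndependent ℝ v) {p : EuclideanSpace ℝ (Fin n)} (hp : p ∈ A)
    (hpv : ∀ i, p + v i ∈ A) : k ≤ setDim A := by
  have hspan : Submodule.span ℝ (Set.range v) ≤ vectorSpan ℝ A := by
    rw [Submodule.span_le]
    rintro _ ⟨i, rfl⟩
    simpa using vsub_mem_vectorSpan ℝ (hpv i) hp
  rw [setDim, direction_affineSpan]
  simpa [finrank_span_eq_card hv] using Submodule.finrank_mono hspan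

end setDim

def slicedBall : Set (EuclideanSpace ℝ (Fin 3)) := closedBall 0 1 ∩ {x | x 2 ≤ 1 / 2}

def slicedBallTop : Set (EuclideanSpace ℝ (Fin 3)) := slicedBall ∩ {x | x 2 = 1 / 2}

lemma mem_slicedBall {x : EuclideanSpace ℝ (Fin 3)} :
    x ∈ slicedBall ↔ ‖x‖ ≤ 1 ∧ x 2 ≤ 1 / 2 := by
  simp [slicedBall]

lemma mem_slicedBallTop {x : EuclideanSpace ℝ (Fin 3)} :
    x ∈ slicedBallTop ↔ ‖x‖ ≤ 1 ∧ x 2 = 1 / 2 := by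
  simp +contextual [slicedBallTop, slicedBall]

lemma convex_slicedBall : Convex ℝ slicedBall :=
  (convex_closedBall 0 1).inter (convex_halfSpace_le (EuclideanSpace.proj 2).isLinear _)

lemma convex_slicedBallTop : Convex ℝ slicedBallTop :=
  convex_slicedBall.inter (convex_hyperplane (EuclideanSpace.proj 2).isLinear _)

lemma isExposed_slicedBallTop : IsExposed ℝ slicedBall slicedBallTop := by
  refine fun _ ↦ ⟨EuclideanSpace.proj 2, Set.ext fun x ↦ ⟨?_, ?_⟩⟩
  · rintro ⟨hx, hx2 : x 2 = 1 / 2⟩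
    exact ⟨hx, fun y hy ↦ by simpa [hx2] using (mem_slicedBall.1 hy).2⟩
  · rintro ⟨hx, hmax⟩
    refine ⟨hx, le_antisymm (mem_slicedBall.1 hx).2 ?_⟩
    simpa using hmax (EuclideanSpace.single 2 (1 / 2)) (mem_slicedBall.2 (by norm_num))

lemma single_zero_mem_extremePoints_slicedBall :
    EuclideanSpace.single 0 1 ∈ slicedBall.extremePoints ℝ := by
  have hmem : EuclideanSpace.single (0 : Fin 3) (1 : ℝ) ∈ slicedBall :=
    mem_slicedBall.2 (by simp)
  refine inter_extremePoints_subset_extremePoints_of_subset Set.inter_subset_left ⟨hmem, ?_⟩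
  rw [StrictConvexSpace.extremePoints_closedBall_eq_sphere, mem_sphere_zero_iff_norm]
  simp

lemma setDim_slicedBall : setDim slicedBall = 3 := by
  have hopen : IsOpen (ball (0 : EuclideanSpace ℝ (Fin 3)) 1 ∩ {x | x 2 < 1 / 2}) :=
    isOpen_ball.inter (isOpen_lt (by fun_prop) continuous_const)
  refine setDim_eq_of_nonempty_interior ⟨0, interior_maximal ?_ hopen (by norm_num)⟩
  exact fun x ⟨hx1, hx2⟩ ↦ mem_slicedBall.2 ⟨(mem_ball_zero_iff.1 hx1).le, le_of_lt hx2⟩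

lemma setDim_slicedBallTop : setDim slicedBallTop = 2 := by
  have hproj : (EuclideanSpace.proj 2 : EuclideanSpace ℝ (Fin 3) →L[ℝ] ℝ).toLinearMap ≠ 0 :=
    fun h ↦ by simpa using LinearMap.congr_fun h (EuclideanSpace.single 2 1)
  have hlt : setDim slicedBallTop < 3 :=
    setDim_lt_of_subset_hyperplane hproj (c := 1 / 2) fun x hx ↦ (mem_slicedBallTop.1 hx).2
  have hli : LinearIndependent ℝ ![!₂[(1 / 2 : ℝ), 0, 0], !₂[0, 1 / 2, 0]] :=
    LinearIndependent.pair_iff.2 fun s t hst ↦ by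
      simpa using And.intro (congrArg (· 0) hst) (congrArg (· 1) hst)
  have hge : 2 ≤ setDim slicedBallTop := by
    refine le_setDim_of_add_mem hli (p := !₂[0, 0, 1 / 2]) ?_ fun i ↦ ?_
    · simp [mem_slicedBallTop, EuclideanSpace.norm_eq, Fin.sum_univ_three]
      norm_num
    · fin_cases i <;> simp [mem_slicedBallTop, EuclideanSpace.norm_eq, Fin.sum_univ_three] <;>
        norm_num
  omega

lemma mem_of_isExtreme_slicedBall {F : Set (EuclideanSpace ℝ (Fin 3))}
    (hF : IsExtreme ℝ slicedBall F) {m d : EuclideanSpace ℝ (Fin 3)} (hm : m ∈ F) (hm1 : ‖m‖ < 1)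
    (hd : d ∈ slicedBall) (htop : m 2 = 1 / 2 → d 2 = 1 / 2) : d ∈ F := by
  refine hF.mem_of_eventually_add_smul_sub_mem hm hd ?_
  have hcont : Continuous fun t : ℝ ↦ m + t • (m - d) := by fun_prop
  have hlim : Tendsto (fun t : ℝ ↦ m + t • (m - d)) (𝓝[>] 0) (𝓝 m) :=
    tendsto_nhdsWithin_of_tendsto_nhds (by simpa using hcont.tendsto 0)
  have hnorm : ∀ᶠ t in 𝓝[>] (0 : ℝ), ‖m + t • (m - d)‖ < 1 :=
    hlim.norm.eventually (gt_mem_nhds hm1)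
  have hcoord : ∀ᶠ t in 𝓝[>] (0 : ℝ), (m + t • (m - d)) 2 ≤ 1 / 2 := by
    rcases (mem_slicedBall.1 (hF.1 hm)).2.lt_or_eq with hlt | heq
    · have hproj : Continuous fun x : EuclideanSpace ℝ (Fin 3) ↦ x 2 := by fun_prop
      exact ((hproj.tendsto m).comp hlim).eventually (ge_mem_nhds hlt)
    · exact Eventually.of_forall fun t ↦ by simp [heq, htop heq]
  filter_upwards [hnorm, hcoord] with t h1 h2 using mem_slicedBall.2 ⟨h1.le, h2⟩

lemma setDim_ne_one_of_isFace_slicedBall {F : Set (EuclideanSpace ℝ (Fin 3))}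
    (hF : IsFace slicedBall F) : setDim F ≠ 1 := by
  intro hdim
  obtain ⟨x, hx, y, hy, hxy⟩ : F.Nontrivial := Set.not_subsingleton_iff.1
    fun h ↦ by simp [setDim_eq_zero_of_subsingleton h] at hdim
  set m := (1 / 2 : ℝ) • x + (1 / 2 : ℝ) • y
  have hm : m ∈ F := hF.1 hx hy (by norm_num) (by norm_num) (by norm_num)
  have hm1 : ‖m‖ < 1 := by
    have hhalf : (0 : ℝ) < 1 / 2 := by norm_num
    have := strictConvex_closedBall ℝ (0 : EuclideanSpace ℝ (Fin 3)) 1 (hF.2.1 hx).1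
      (hF.2.1 hy).1 hxy hhalf hhalf (by norm_num)
    rwa [interior_closedBall _ one_ne_zero, mem_ball_zero_iff] at this
  rcases (mem_slicedBall.1 (hF.2.1 hm)).2.lt_or_eq with hlt | heq
  · have hFeq : F = slicedBall := hF.2.1.antisymm fun d hd ↦
      mem_of_isExtreme_slicedBall hF.2 hm hm1 hd fun h ↦ absurd h hlt.ne
    simp [hFeq, setDim_slicedBall] at hdim
  · have htopF : slicedBallTop ⊆ F := fun d hd ↦
      mem_of_isExtreme_slicedBall hF.2 hm hm1 hd.1 fun _ ↦ (mem_slicedBallTop.1 hd).2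
    have := setDim_mono htopF
    rw [setDim_slicedBallTop] at this
    omega

theorem sliced_ball_face_dims
    (C : Set (EuclideanSpace ℝ (Fin 3)))
    (hC : C = closedBall 0 1 ∩ {x : EuclideanSpace ℝ (Fin 3) | x 2 ≤ 1 / 2}) :
    (∃ F, IsFace C F ∧ F.Nonempty ∧ setDim F = 0) ∧
      (∃ F, IsFace C F ∧ setDim F = 2) ∧
      (∃ F, IsFace C F ∧ setDim F = 3) ∧
      ¬∃ F, IsFace C F ∧ setDim F = 1 := by
  obtain rfl : C = slicedBall := hC
  refine ⟨⟨{EuclideanSpace.single 0 1}, ⟨convex_singleton _, ?_⟩, Set.singleton_nonempty _,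
      setDim_eq_zero_of_subsingleton Set.subsingleton_singleton⟩,
    ⟨slicedBallTop, ⟨convex_slicedBallTop, isExposed_slicedBallTop.isExtreme⟩,
      setDim_slicedBallTop⟩,
    ⟨slicedBall, ⟨convex_slicedBall, IsExtreme.refl ℝ _⟩, setDim_slicedBall⟩,
    fun ⟨F, hF, hdim⟩ ↦ setDim_ne_one_of_isFace_slicedBall hF hdim⟩
  exact isExtreme_singleton.2 single_zero_mem_extremePoints_slicedBall
end
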